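/- arXiv:2501.11697 — 6 statements merged into one kernel-verified Lean document; each statement's English description precedes it below -/
import Mathlib

section
/- In a directed temporal graph under non-strict reachability, the reachability graph cannot contain an induced directed cycle of length at least 3. Formally: if G is a finite directed graph whose vertices v_1,...,v_n (n ≥ 3) form a directed cycle, and λ assigns a nonempty finite set of natural-number labels to each edge, then the non-strict temporal reachability relation on {v_1,...,v_n} using only the cycle edges contains at least one 'transitive' pair: some v_i reaches v_{i+2} (indices mod n). -/
/-- A directed temporal graph: edge relation plus a set of time labels per edge. -/
structure TGraph (V : Type) where
  E : V → V → Prop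
  lab : V → V → Set ℕ

/-- Non-strict temporal reachability via a nonempty temporal path whose last label is `t`. -/
inductive TGraph.NReachAt {V : Type} (G : TGraph V) : V → V → ℕ → Prop
  | single {u v : V} {t : ℕ} : G.E u v → t ∈ G.lab u v → G.NReachAt u v t
  | cons {u w v : V} {t t' : ℕ} : G.NReachAt u w t → G.E w v → t' ∈ G.lab w v →
      t ≤ t' → G.NReachAt u v t'

/-- Strict temporal reachability via a nonempty temporal path whose last label is `t`. -/
inductive TGraph.SReachAt {V : Type} (G : TGraph V) : V → V → ℕ → Prop
  | single {u v : V} {t : ℕ} : G.E u v → t ∈ G.lab u v → G.SReachAt u v t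
  | cons {u w v : V} {t t' : ℕ} : G.SReachAt u w t → G.E w v → t' ∈ G.lab w v →
      t < t' → G.SReachAt u v t'

/-- In a directed temporal graph whose footprint is a directed cycle
`v_i → v_{i+1}` on `n ≥ 3` vertices, with a nonempty finite label set on each edge,
non-strict reachability contains at least one transitive pair: some `v_i` reaches `v_{i+2}`. -/
theorem stmt0 (n : ℕ) (hn : 3 ≤ n) (lam : ZMod n → Finset ℕ)
    (hne : ∀ i : ZMod n, (lam i).Nonempty) :
    let G : TGraph (ZMod n) :=
      { E := fun i j => j = i + 1
        lab := fun i j => if j = i + 1 then (lam i : Set ℕ) else ∅ }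
    ∃ i : ZMod n, ∃ t : ℕ, G.NReachAt i (i + 2) t := by
  intro G
  haveI : NeZero n := ⟨by omega⟩
  set f : ZMod n → ℕ := fun i => (lam i).min' (hne i) with hf
  obtain ⟨i, hi⟩ := Finite.exists_min f
  refine ⟨i, f (i + 1), ?_⟩
  have h1 : G.NReachAt i (i + 1) (f i) :=
    .single rfl (by simp [G, f, Finset.min'_mem])
  have h2 : (f (i + 1)) ∈ G.lab (i + 1) (i + 1 + 1) := by
    simp [G, f, Finset.min'_mem]
  have : G.NReachAt i (i + 1 + 1) (f (i + 1)) :=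
    .cons h1 rfl h2 (hi (i + 1))
  simpa [add_assoc, one_add_one_eq_two] using this
end

section
/- Any directed proper temporal graph on n > 2 vertices whose reachability graph is the complete directed graph (every ordered pair of distinct vertices connected by a temporal path) must contain at least n + 1 temporal edges. -/
/-- Two temporal edges (stored as `(u, v, t)`) are incident to a common vertex. -/
def shares {V : Type} (e e' : V × V × ℕ) : Prop :=
  e.1 = e'.1 ∨ e.1 = e'.2.1 ∨ e.2.1 = e'.1 ∨ e.2.1 = e'.2.1

/-- A finite set of temporal edges is proper if no two distinct temporal edges
incident to a common vertex share a time label. -/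
def ProperTE {V : Type} (TE : Finset (V × V × ℕ)) : Prop :=
  ∀ e ∈ TE, ∀ e' ∈ TE, e ≠ e' → shares e e' → e.2.2 ≠ e'.2.2

/-- Temporal reachability (non-strict; for proper graphs this coincides with strict)
via a nonempty temporal path ending with label `t`. -/
inductive RA {V : Type} (TE : Finset (V × V × ℕ)) : V → V → ℕ → Prop
  | single {u v : V} {t : ℕ} : (u, v, t) ∈ TE → RA TE u v t
  | cons {u w v : V} {t t' : ℕ} : RA TE u w t → (w, v, t') ∈ TE → t ≤ t' → RA TE u v t'

/-- Any reachability witness starts with an edge out of `u`. -/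
lemma RA_first {V : Type} {TE : Finset (V × V × ℕ)} {u v : V} {t : ℕ}
    (h : RA TE u v t) : ∃ e ∈ TE, e.1 = u := by
  induction h with
  | single h => exact ⟨_, h, rfl⟩
  | cons _ _ _ ih => exact ih

/-- Any directed proper temporal graph on `n > 2` vertices whose
reachability graph is the complete directed graph has at least `n + 1` temporal edges. -/
theorem stmt2 {V : Type} [Fintype V] [DecidableEq V] (TE : Finset (V × V × ℕ))
    (hV : 2 < Fintype.card V) (hproper : ProperTE TE)
    (hconn : ∀ u v : V, u ≠ v → ∃ t, RA TE u v t) :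
    Fintype.card V + 1 ≤ TE.card := by
  by_contra hle
  push_neg at hle
  have hcard : TE.card ≤ Fintype.card V := Nat.lt_succ_iff.mp hle
  -- every vertex has an out-edge
  have hout : ∀ u : V, ∃ e ∈ TE, e.1 = u := by
    intro u
    have : ∃ v : V, v ≠ u := Fintype.exists_ne_of_one_lt_card (by omega) u
    obtain ⟨v, hv⟩ := this
    obtain ⟨t, ht⟩ := hconn u v (Ne.symm hv)
    exact RA_first ht
  -- fiber decomposition of TE by source vertex
  have hsum : TE.card = ∑ u : V, (TE.filter (fun e => e.1 = u)).card :=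
    Finset.card_eq_sum_card_fiberwise (fun e _ => Finset.mem_univ e.1)
  have hfib1 : ∀ u : V, 1 ≤ (TE.filter (fun e => e.1 = u)).card := by
    intro u
    obtain ⟨e, he, heq⟩ := hout u
    exact Finset.card_pos.mpr ⟨e, Finset.mem_filter.mpr ⟨he, heq⟩⟩
  have hfib : ∀ u : V, (TE.filter (fun e => e.1 = u)).card = 1 := by
    intro u
    by_contra hne
    have h2 : 2 ≤ (TE.filter (fun e => e.1 = u)).card := by
      have := hfib1 u; omega
    have hlt : ∑ v : V, (1 : ℕ) < ∑ v : V, (TE.filter (fun e => e.1 = v)).card :=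
      Finset.sum_lt_sum (fun v _ => hfib1 v) ⟨u, Finset.mem_univ u, by omega⟩
    simp only [Finset.sum_const, Finset.card_univ, smul_eq_mul, mul_one] at hlt
    omega
  -- extract the functional structure
  have huniq : ∀ u : V, ∃ e : V × V × ℕ, TE.filter (fun e => e.1 = u) = {e} :=
    fun u => Finset.card_eq_one.mp (hfib u)
  choose g hg using huniq
  have hgmem : ∀ u : V, g u ∈ TE ∧ (g u).1 = u := by
    intro u
    have : g u ∈ TE.filter (fun e => e.1 = u) := by rw [hg u]; exact Finset.mem_singleton_self _
    exact Finset.mem_filter.mp this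
  set f : V → V := fun u => (g u).2.1 with hf
  set τ : V → ℕ := fun u => (g u).2.2 with hτ
  have hmem : ∀ u : V, (u, f u, τ u) ∈ TE := by
    intro u
    have h1 := (hgmem u).1
    have h2 := (hgmem u).2
    have : g u = (u, f u, τ u) := by
      ext <;> simp [hf, hτ, h2]
    rwa [this] at h1
  have hedge : ∀ a b : V, ∀ s : ℕ, (a, b, s) ∈ TE → b = f a ∧ s = τ a := by
    intro a b s hab
    have : (a, b, s) ∈ TE.filter (fun e => e.1 = a) := Finset.mem_filter.mpr ⟨hab, rfl⟩
    rw [hg a, Finset.mem_singleton] at this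
    refine ⟨?_, ?_⟩
    · show b = (g a).2.1
      exact congrArg (fun e => e.2.1) this
    · show s = (g a).2.2
      exact congrArg (fun e => e.2.2) this
  -- no fixed points
  have hfix : ∀ u : V, f u = u → ∀ v t, RA TE u v t → v = u := by
    intro u hu v t h
    induction h with
    | single h => rw [(hedge _ _ _ h).1, hu]
    | @cons w v' t1 t2 _ hwv _ ih =>
        rw [ih] at hwv
        rw [(hedge _ _ _ hwv).1, hu]
  have hnofix : ∀ u : V, f u ≠ u := by
    intro u hu
    obtain ⟨v, hv⟩ := Fintype.exists_ne_of_one_lt_card (show 1 < Fintype.card V by omega) u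
    obtain ⟨t, ht⟩ := hconn u v (Ne.symm hv)
    exact hv (hfix u hu v t ht)
  -- key lemma: a path from u going beyond f u forces τ u < τ (f u)
  have keyA : ∀ u v t, RA TE u v t → (v = f u ∧ t = τ u) ∨ τ u < τ (f u) := by
    intro u v t h
    induction h with
    | single h =>
        obtain ⟨h1, h2⟩ := hedge _ _ _ h
        exact Or.inl ⟨h1, h2⟩
    | @cons w v' t1 t2 _ hwv hle ih =>
        rcases ih with ⟨hw, ht1⟩ | hlt
        · subst hw
          obtain ⟨_, ht2⟩ := hedge _ _ _ hwv
          right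
          have hne1 : (u, f u, τ u) ≠ (f u, f (f u), τ (f u)) := by
            intro heq
            exact hnofix u (congrArg Prod.fst heq).symm
          have hprop := hproper (u, f u, τ u) (hmem u) (f u, f (f u), τ (f u))
            (hmem (f u)) hne1 (Or.inr (Or.inr (Or.inl rfl)))
          simp only at hprop
          have : t1 ≤ t2 := hle
          omega
        · exact Or.inr hlt
  -- take a τ-maximal vertex
  obtain ⟨u, -, hmax⟩ := Finset.exists_max_image Finset.univ τ
    (Finset.univ_nonempty_iff.mpr (Fintype.card_pos_iff.mp (by omega)))
  -- pick v outside {u, f u}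
  have hsub : ({u, f u} : Finset V).card < Fintype.card V := by
    have : ({u, f u} : Finset V).card ≤ 2 := Finset.card_insert_le _ _ |>.trans (by simp)
    omega
  have hne : (Finset.univ \ ({u, f u} : Finset V)).Nonempty := by
    rw [← Finset.card_pos, Finset.card_sdiff_of_subset (Finset.subset_univ _), Finset.card_univ]
    omega
  obtain ⟨v, hv⟩ := hne
  rw [Finset.mem_sdiff] at hv
  have hvnot := hv.2
  simp only [Finset.mem_insert, Finset.mem_singleton, not_or] at hvnot
  obtain ⟨hvu, hvfu⟩ := hvnot
  obtain ⟨t, ht⟩ := hconn u v (fun h => hvu h.symm)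
  rcases keyA u v t ht with ⟨hvf, -⟩ | hlt
  · exact hvfu hvf
  · exact absurd (hmax (f u) (Finset.mem_univ _)) (by omega)
end

section
/- Separation of directed strict from directed non-strict under reachability equivalence: there is no directed temporal graph on three vertices {a, b, c} whose non-strict reachability graph is exactly the directed 3-cycle {(a,b),(b,c),(c,a)}. Hence the reachability graph of the directed triangle with uniform label 1 (under strict semantics) cannot be realized by any directed temporal graph under non-strict semantics. -/
/-- If the non-strict reachability relation is exactly the 3-cycle, then any non-strict
reach between distinct vertices forces a direct labeled edge. -/
lemma direct_edge {G : TGraph (Fin 3)}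
    (H : ∀ u v : Fin 3, u ≠ v → ((∃ t, G.NReachAt u v t) ↔ v = u + 1)) :
    ∀ u v t, G.NReachAt u v t → u ≠ v →
      ∃ s, s ≤ t ∧ G.E u v ∧ s ∈ G.lab u v := by
  intro u v t h
  induction h with
  | single he hl => exact fun _ => ⟨_, le_refl _, he, hl⟩
  | @cons w v t t' hr he hl hle ih =>
    intro huv
    by_cases hwv : w = v
    · subst hwv
      obtain ⟨s, hs, h1, h2⟩ := ih huv
      exact ⟨s, hs.trans hle, h1, h2⟩
    · have hv : v = w + 1 := (H w v hwv).mp ⟨t', .single he hl⟩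
      by_cases huw : u = w
      · subst huw; exact ⟨t', le_refl _, he, hl⟩
      · obtain ⟨s, hs, h1, h2⟩ := ih huw
        have hw : w = u + 1 := (H u w huw).mp ⟨s, .single h1 h2⟩
        have hv' : v = u + 1 := (H u v huv).mp ⟨t', .cons hr he hl hle⟩
        exfalso
        rw [hv', hw] at hv
        revert hv
        fin_cases u <;> decide

/-- There is no directed temporal graph on three vertices whose
non-strict reachability graph is exactly the directed 3-cycle. -/
theorem stmt4 :
    ¬ ∃ G : TGraph (Fin 3), ∀ u v : Fin 3, u ≠ v →
      ((∃ t, G.NReachAt u v t) ↔ v = u + 1) := by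
  rintro ⟨G, H⟩
  have get : ∀ u : Fin 3, ∃ s, G.E u (u+1) ∧ s ∈ G.lab u (u+1) := by
    intro u
    have hne : u ≠ u + 1 := by fin_cases u <;> decide
    obtain ⟨t, ht⟩ := (H u (u+1) hne).mpr rfl
    obtain ⟨s, _, h1, h2⟩ := direct_edge H u (u+1) t ht hne
    exact ⟨s, h1, h2⟩
  obtain ⟨s1, e1, l1⟩ := get 0
  obtain ⟨s2, e2, l2⟩ := get 1
  obtain ⟨s3, e3, l3⟩ := get 2
  have key : ∀ u : Fin 3, ∀ s s', G.E u (u+1) → s ∈ G.lab u (u+1) →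
      G.E (u+1) (u+1+1) → s' ∈ G.lab (u+1) (u+1+1) → ¬ s ≤ s' := by
    intro u s s' he hl he' hl' hss
    have hr : G.NReachAt u (u+1+1) s' := .cons (.single he hl) he' hl' hss
    have hne : u ≠ u + 1 + 1 := by fin_cases u <;> decide
    have := (H u (u+1+1) hne).mp ⟨s', hr⟩
    revert this
    fin_cases u <;> decide
  have h12 := key 0 s1 s2 e1 l1 (by simpa using e2) (by simpa using l2)
  have h23 := key 1 s2 s3 e2 l2 (by simpa using e3) (by simpa using l3)
  have h31 := key 2 s3 s1 e3 l3 (by simpa using e1) (by simpa using l1)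
  omega
end

section
/- Separation of directed proper from directed non-strict simple (footprint rigidity step): let R be the directed graph on {a,b,c,d} with edges {(a,b),(b,c),(c,d),(d,a),(a,c),(b,d)}. Any directed graph H on {a,b,c,d} that can serve as the footprint of a non-strict temporal graph with reachability graph exactly R must contain the edges (d,a), (a,b), (c,d), (b,c), and must not contain (a,c) or (b,d); hence H's edge set restricted to realizable footprints is exactly the 4-cycle {(a,b),(b,c),(c,d),(d,a)}. -/
/-- The target reachability graph on `{a,b,c,d} = {0,1,2,3}`. -/
def R4 (u v : Fin 4) : Prop :=
  (u, v) ∈ ({(0, 1), (1, 2), (2, 3), (3, 0), (0, 2), (1, 3)} : Set (Fin 4 × Fin 4))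

lemma last_edge {V : Type} (G : TGraph V) :
    ∀ u v t, G.NReachAt u v t → u ≠ v →
      ∃ w, w ≠ v ∧ G.E w v ∧ (w = u ∨ ∃ s, G.NReachAt u w s) := by
  intro u v t h
  induction h with
  | single he hl => intro huv; exact ⟨_, huv, he, Or.inl rfl⟩
  | cons hp he hl hle ih =>
      intro huv
      rename_i w' v' t t'
      by_cases hwv : w' = v'
      · subst hwv; exact ih huv
      · exact ⟨w', hwv, he, Or.inr ⟨t, hp⟩⟩

/-- footprint rigidity: any non-strict temporal graph on `{a,b,c,d}`
with nonempty label sets whose reachability graph is exactly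
`{(a,b),(b,c),(c,d),(d,a),(a,c),(b,d)}` must have as footprint (on distinct pairs)
exactly the directed 4-cycle `{(a,b),(b,c),(c,d),(d,a)}`; in particular it contains
`(d,a),(a,b),(c,d),(b,c)` and contains neither `(a,c)` nor `(b,d)`. -/
theorem stmt10 (G : TGraph (Fin 4))
    (hlab : ∀ u v : Fin 4, G.E u v → (G.lab u v).Nonempty)
    (hreach : ∀ u v : Fin 4, u ≠ v → ((∃ t, G.NReachAt u v t) ↔ R4 u v)) :
    ∀ u v : Fin 4, u ≠ v →
      (G.E u v ↔ (u, v) ∈ ({(0, 1), (1, 2), (2, 3), (3, 0)} : Set (Fin 4 × Fin 4))) := by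
  -- edges imply R4
  have hE : ∀ u v : Fin 4, u ≠ v → G.E u v → R4 u v := by
    intro u v huv he
    obtain ⟨t, ht⟩ := hlab u v he
    exact (hreach u v huv).mp ⟨t, .single he ht⟩
  -- the four cycle edges are in E
  have key : ∀ u v : Fin 4, u ≠ v → R4 u v →
      (∀ w : Fin 4, w ≠ v → R4 u w → R4 w v → False) → G.E u v := by
    intro u v huv hr hno
    obtain ⟨t, ht⟩ := (hreach u v huv).mpr hr
    obtain ⟨w, hwv, he, hw⟩ := last_edge G u v t ht huv
    rcases hw with rfl | ⟨s, hs⟩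
    · exact he
    · by_cases hwu : u = w
      · subst hwu; exact he
      · exact absurd he fun he =>
          hno w hwv ((hreach u w hwu).mp ⟨s, hs⟩) (hE w v hwv he)
  have e01 : G.E 0 1 := key 0 1 (by decide) (by simp [R4]) (by intro w; fin_cases w <;> simp [R4] <;> decide)
  have e12 : G.E 1 2 := key 1 2 (by decide) (by simp [R4]) (by intro w; fin_cases w <;> simp [R4] <;> decide)
  have e23 : G.E 2 3 := key 2 3 (by decide) (by simp [R4]) (by intro w; fin_cases w <;> simp [R4] <;> decide)
  have e30 : G.E 3 0 := key 3 0 (by decide) (by simp [R4]) (by intro w; fin_cases w <;> simp [R4] <;> decide)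
  obtain ⟨s23, hs23⟩ := hlab 2 3 e23
  obtain ⟨r30, hr30⟩ := hlab 3 0 e30
  obtain ⟨q01, hq01⟩ := hlab 0 1 e01
  -- no reachabilities outside R4
  have hno : ∀ u v : Fin 4, u ≠ v → ¬ R4 u v → ∀ t, ¬ G.NReachAt u v t := by
    intro u v huv hr t ht
    exact hr ((hreach u v huv).mp ⟨t, ht⟩)
  have ne02 : ¬ G.E 0 2 := by
    intro he
    obtain ⟨t, ht⟩ := hlab 0 2 he
    have h1 : ¬ t ≤ s23 := fun h =>
      hno 0 3 (by decide) (by simp [R4]) s23 (.cons (.single he ht) e23 hs23 h)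
    have h2 : ¬ s23 ≤ r30 := fun h =>
      hno 2 0 (by decide) (by simp [R4]) r30 (.cons (.single e23 hs23) e30 hr30 h)
    have h3 : ¬ r30 ≤ t := fun h =>
      hno 3 2 (by decide) (by simp [R4]) t (.cons (.single e30 hr30) he ht h)
    omega
  have ne13 : ¬ G.E 1 3 := by
    intro he
    obtain ⟨t, ht⟩ := hlab 1 3 he
    have h1 : ¬ t ≤ r30 := fun h =>
      hno 1 0 (by decide) (by simp [R4]) r30 (.cons (.single he ht) e30 hr30 h)
    have h2 : ¬ r30 ≤ q01 := fun h =>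
      hno 3 1 (by decide) (by simp [R4]) q01 (.cons (.single e30 hr30) e01 hq01 h)
    have h3 : ¬ q01 ≤ t := fun h =>
      hno 0 3 (by decide) (by simp [R4]) t (.cons (.single e01 hq01) he ht h)
    omega
  intro u v huv
  constructor
  · intro he
    have hr := hE u v huv he
    simp only [R4, Set.mem_insert_iff, Set.mem_singleton_iff, Prod.mk.injEq] at hr ⊢
    rcases hr with ⟨h1, h2⟩ | ⟨h1, h2⟩ | ⟨h1, h2⟩ | ⟨h1, h2⟩ | ⟨h1, h2⟩ | ⟨h1, h2⟩ <;>
      subst h1 <;> subst h2 <;> simp_all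
  · intro hm
    simp only [Set.mem_insert_iff, Set.mem_singleton_iff, Prod.mk.injEq] at hm
    rcases hm with ⟨h1, h2⟩ | ⟨h1, h2⟩ | ⟨h1, h2⟩ | ⟨h1, h2⟩ <;>
      subst h1 <;> subst h2 <;> assumption
end

section
/- Separation of undirected strict from directed non-strict: the directed graph R on {a,b,c,d} with edge set exactly {(a,b),(b,c),(c,d),(d,a)} (an induced directed 4-cycle) cannot be the reachability graph of any directed temporal graph under non-strict semantics. -/
lemma edge_of_reach (G : TGraph (Fin 4))
    (h : ∀ u v : Fin 4, u ≠ v → ((∃ t, G.NReachAt u v t) ↔ v = u + 1)) :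
    ∀ u v : Fin 4, ∀ t : ℕ, G.NReachAt u v t → v = u + 1 →
      ∃ s, G.E u v ∧ s ∈ G.lab u v := by
  intro u v t hr
  induction hr with
  | @single v t he hl => exact fun _ => ⟨t, he, hl⟩
  | @cons w v t t' hr he hl hle ih =>
    intro hv
    by_cases hw : w = u
    · subst hw; exact ⟨t', he, hl⟩
    · have hwu : w = u + 1 := (h u w (fun e => hw e.symm)).mp ⟨t, hr⟩
      have hwv : w = v := by rw [hwu, hv]
      subst hwv
      exact ih hwu

/-- the induced directed 4-cycle cannot be the reachability graph of
any directed temporal graph under non-strict semantics. -/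
theorem stmt16 :
    ¬ ∃ G : TGraph (Fin 4), ∀ u v : Fin 4, u ≠ v →
      ((∃ t, G.NReachAt u v t) ↔ v = u + 1) := by
  rintro ⟨G, h⟩
  have key : ∀ u : Fin 4, ∃ s, G.E u (u + 1) ∧ s ∈ G.lab u (u + 1) := by
    intro u
    have hne : u ≠ u + 1 := by revert u; decide
    obtain ⟨t, ht⟩ := (h u (u + 1) hne).mpr rfl
    exact edge_of_reach G h u (u + 1) t ht rfl
  choose s hE hlab using key
  have hlt : ∀ u : Fin 4, s (u + 1) < s u := by
    intro u
    by_contra hle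
    push_neg at hle
    have hr : G.NReachAt u (u + 1 + 1) (s (u + 1)) :=
      .cons (.single (hE u) (hlab u)) (hE (u + 1)) (hlab (u + 1)) hle
    have hne' : ∀ u : Fin 4, u ≠ u + 1 + 1 := by decide
    have hne := hne' u
    have h2 : ∀ u : Fin 4, u + 1 + 1 ≠ u + 1 := by decide
    exact h2 u ((h u (u + 1 + 1) hne).mp ⟨_, hr⟩)
  have h0 := hlt 0
  have h1 := hlt 1
  have h2 := hlt 2
  have h3 := hlt 3
  have e0 : (0 : Fin 4) + 1 = 1 := by decide
  have e1 : (1 : Fin 4) + 1 = 2 := by decide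
  have e2 : (2 : Fin 4) + 1 = 3 := by decide
  have e3 : (3 : Fin 4) + 1 = 0 := by decide
  rw [e0] at h0; rw [e1] at h1; rw [e2] at h2; rw [e3] at h3
  omega
end

section
/- Semaphore subdivision preserves strict reachability between original vertices: given a directed temporal graph G where each temporal edge is (u,v,t) with t ∈ ℕ, t ≥ 1, construct H by replacing each temporal edge (u,v,t) with a new vertex w_{u,v,t} and two temporal edges (u, w_{u,v,t}, 3t−1) and (w_{u,v,t}, v, 3t+1). Then for all original vertices u, v: u reaches v by a strict temporal path in G iff u reaches v by a strict temporal path in H. -/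
/-- The semaphore subdivision: each temporal edge `(u,v,t)` is replaced by a fresh
vertex `w := (u,v,t)` and the two temporal edges `(u, w, 3t-1)` and `(w, v, 3t+1)`. -/
def semaphore {V : Type} (G : TGraph V) : TGraph (V ⊕ (V × V × ℕ)) where
  E := fun a b =>
    match a, b with
    | Sum.inl u, Sum.inr (u', v, t) => u = u' ∧ G.E u' v ∧ t ∈ G.lab u' v
    | Sum.inr (u, v, t), Sum.inl v' => v = v' ∧ G.E u v ∧ t ∈ G.lab u v
    | _, _ => False
  lab := fun a b =>
    match a, b with
    | Sum.inl _, Sum.inr (_, _, t) => {3 * t - 1}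
    | Sum.inr (_, _, t), Sum.inl _ => {3 * t + 1}
    | _, _ => ∅

lemma semaphore_forward {V : Type} (G : TGraph V)
    (hpos : ∀ (u v : V) (t : ℕ), t ∈ G.lab u v → 1 ≤ t)
    {u v : V} {t : ℕ} (h : G.SReachAt u v t) :
    (semaphore G).SReachAt (Sum.inl u) (Sum.inl v) (3 * t + 1) := by
  induction h with
  | @single v t he hl =>
    have e1 : (semaphore G).E (Sum.inl u) (Sum.inr (u, v, t)) := ⟨rfl, he, hl⟩
    have e2 : (semaphore G).E (Sum.inr (u, v, t)) (Sum.inl v) := ⟨rfl, he, hl⟩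
    have l1 : 3 * t - 1 ∈ (semaphore G).lab (Sum.inl u) (Sum.inr (u, v, t)) := rfl
    have l2 : 3 * t + 1 ∈ (semaphore G).lab (Sum.inr (u, v, t)) (Sum.inl v) := rfl
    exact TGraph.SReachAt.cons (TGraph.SReachAt.single e1 l1) e2 l2 (by omega)
  | @cons w v t t' _ he hl hlt ih =>
    have h1 : 1 ≤ t' := hpos w v t' hl
    have e1 : (semaphore G).E (Sum.inl w) (Sum.inr (w, v, t')) := ⟨rfl, he, hl⟩
    have e2 : (semaphore G).E (Sum.inr (w, v, t')) (Sum.inl v) := ⟨rfl, he, hl⟩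
    have l1 : 3 * t' - 1 ∈ (semaphore G).lab (Sum.inl w) (Sum.inr (w, v, t')) := rfl
    have l2 : 3 * t' + 1 ∈ (semaphore G).lab (Sum.inr (w, v, t')) (Sum.inl v) := rfl
    exact TGraph.SReachAt.cons (TGraph.SReachAt.cons ih e1 l1 (by omega)) e2 l2 (by omega)

lemma semaphore_backward {V : Type} (G : TGraph V)
    (hpos : ∀ (u v : V) (t : ℕ), t ∈ G.lab u v → 1 ≤ t)
    {u : V} {b : V ⊕ (V × V × ℕ)} {s : ℕ}
    (h : (semaphore G).SReachAt (Sum.inl u) b s) :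
    match b with
    | Sum.inl v => ∃ t, G.SReachAt u v t ∧ s = 3 * t + 1
    | Sum.inr (x, y, t) => s = 3 * t - 1 ∧ G.E x y ∧ t ∈ G.lab x y ∧
        (u = x ∨ ∃ t', G.SReachAt u x t' ∧ t' < t) := by
  induction h with
  | @single b t he hl =>
    rcases b with bv | ⟨x, y, t0⟩
    · exact absurd he id
    · obtain ⟨rfl, he', hl'⟩ := he
      exact ⟨hl, he', hl', Or.inl rfl⟩
  | @cons w b t t' _ he hl hlt ih =>
    rcases w with x | ⟨x, y, t0⟩ <;> rcases b with bv | ⟨x', y', t0'⟩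
    · exact absurd he id
    · obtain ⟨rfl, he', hl'⟩ := he
      obtain ⟨t1, hr1, rfl⟩ := ih
      have hts : t' ∈ ({3 * t0' - 1} : Set ℕ) := hl
      have ht0 : 1 ≤ t0' := hpos x y' t0' hl'
      simp only [Set.mem_singleton_iff] at hts
      exact ⟨hts, he', hl', Or.inr ⟨t1, hr1, by omega⟩⟩
    · obtain ⟨rfl, he', hl'⟩ := he
      have hlv : t' ∈ ({3 * t0 + 1} : Set ℕ) := hl
      simp only [Set.mem_singleton_iff] at hlv
      obtain ⟨hs, _, _, hcase⟩ := ih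
      refine ⟨t0, ?_, hlv⟩
      rcases hcase with rfl | ⟨t1, hr1, hlt1⟩
      · exact TGraph.SReachAt.single he' hl'
      · exact TGraph.SReachAt.cons hr1 he' hl' hlt1
    · exact absurd he id

/-- the semaphore subdivision preserves strict reachability between
original vertices (all labels of `G` are at least 1). -/
theorem stmt17 {V : Type} (G : TGraph V)
    (hpos : ∀ (u v : V) (t : ℕ), t ∈ G.lab u v → 1 ≤ t) :
    ∀ u v : V, (∃ t, G.SReachAt u v t) ↔
      ∃ t, (semaphore G).SReachAt (Sum.inl u) (Sum.inl v) t := by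
  intro u v
  constructor
  · rintro ⟨t, h⟩
    exact ⟨3 * t + 1, semaphore_forward G hpos h⟩
  · rintro ⟨s, h⟩
    obtain ⟨t, ht, _⟩ := semaphore_backward G hpos h
    exact ⟨t, ht⟩
end
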